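/- arXiv:1807.01286 — 3 statements merged into one kernel-verified Lean document; each statement's English description precedes it below -/
import Mathlib

section
/- Let u, v : ℝ → ℝ with u bounded by M and v bounded by M and v L-Lipschitz, let ε ∈ (0,1], α ∈ (0,1], and define Φ(x,y) = u(x) - v(y) - (x-y)²/(2√ε) - C(x-y) - α(x² + y²) where |C| ≤ L + 1. If (x̄,ȳ) is a global maximum of Φ over (-∞,0]², then there is a constant K depending only on M and L (not on ε, α, C) such that α(x̄² + ȳ²) + (x̄-ȳ)²/(2√ε) ≤ K. -/
/-! Comparing the maximum with the value at the origin bounds the penalization by the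
oscillation `4M` of `u - v` plus the linear term `(L + 1)|x̄ - ȳ|`. Young's inequality splits
that term into a quarter of the quadratic penalty, which is absorbed on the left, and
`(L + 1)² √ε ≤ (L + 1)²`. -/

lemma mul_abs_le_sq_div_add_sq_mul (a d : ℝ) {s : ℝ} (hs : 0 < s) :
    a * |d| ≤ d ^ 2 / (4 * s) + a ^ 2 * s := by
  have hsq : d ^ 2 / (4 * s) + a ^ 2 * s - a * |d| = (|d| - 2 * s * a) ^ 2 / (4 * s) := by
    field_simp
    linear_combination (sq_abs d).symm
  have : 0 ≤ (|d| - 2 * s * a) ^ 2 / (4 * s) := by positivity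
  linarith

lemma oscillation_le {u v : ℝ → ℝ} {M : ℝ} (hu : ∀ x, |u x| ≤ M) (hv : ∀ x, |v x| ≤ M)
    (x y x' y' : ℝ) : u x - v y - (u x' - v y') ≤ 4 * M := by
  linarith [(abs_le.mp (hu x)).2, (abs_le.mp (hv y)).1, (abs_le.mp (hu x')).1,
    (abs_le.mp (hv y')).2]

lemma penalization_le_of_ge_origin {u v : ℝ → ℝ} {M a C s α x y : ℝ}
    (hu : ∀ x, |u x| ≤ M) (hv : ∀ x, |v x| ≤ M) (hC : |C| ≤ a)
    (hmax : u 0 - v 0 ≤ u x - v y - (x - y) ^ 2 / (2 * s) - C * (x - y) - α * (x ^ 2 + y ^ 2)) :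
    α * (x ^ 2 + y ^ 2) + (x - y) ^ 2 / (2 * s) ≤ 4 * M + a * |x - y| := by
  have hlin : -(C * (x - y)) ≤ a * |x - y| :=
    calc -(C * (x - y)) ≤ |C * (x - y)| := neg_le_abs _
      _ = |C| * |x - y| := abs_mul _ _
      _ ≤ a * |x - y| := mul_le_mul_of_nonneg_right hC (abs_nonneg _)
  linarith [oscillation_le hu hv x y 0 0]

theorem doubling_penalization_bound_general
    (M L : ℝ) :
    ∃ K : ℝ, ∀ (u v : ℝ → ℝ) (ε α C xb yb : ℝ),
      (∀ x, |u x| ≤ M) → (∀ x, |v x| ≤ M) →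
      (∀ x y, |v x - v y| ≤ L * |x - y|) →
      ε ∈ Set.Ioc (0:ℝ) 1 → α ∈ Set.Ioc (0:ℝ) 1 → |C| ≤ L + 1 →
      xb ∈ Set.Iic (0:ℝ) → yb ∈ Set.Iic (0:ℝ) →
      (∀ x ∈ Set.Iic (0:ℝ), ∀ y ∈ Set.Iic (0:ℝ),
        u x - v y - (x - y)^2 / (2 * Real.sqrt ε) - C * (x - y)
          - α * (x^2 + y^2) ≤
        u xb - v yb - (xb - yb)^2 / (2 * Real.sqrt ε) - C * (xb - yb)
          - α * (xb^2 + yb^2)) →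
      α * (xb^2 + yb^2) + (xb - yb)^2 / (2 * Real.sqrt ε) ≤ K := by
  refine ⟨8 * M + 2 * (L + 1) ^ 2, ?_⟩
  intro u v ε α C xb yb hu hv _ hε hα hC _ _ hmax
  set s := Real.sqrt ε
  have hs0 : 0 < s := Real.sqrt_pos.mpr hε.1
  have hs1 : s ≤ 1 := Real.sqrt_le_one.mpr hε.2
  have hbound := penalization_le_of_ge_origin hu hv hC (by simpa using hmax 0 Set.self_mem_Iic 0 Set.self_mem_Iic)
  have hyoung := mul_abs_le_sq_div_add_sq_mul (L + 1) (xb - yb) hs0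
  have hhalf : (xb - yb) ^ 2 / (2 * s) = 2 * ((xb - yb) ^ 2 / (4 * s)) := by
    field_simp
    ring
  have hα_nonneg : 0 ≤ α * (xb ^ 2 + yb ^ 2) := mul_nonneg hα.1.le (by positivity)
  have hquarter : 0 ≤ (xb - yb) ^ 2 / (4 * s) := by positivity
  have hs_le : (L + 1) ^ 2 * s ≤ (L + 1) ^ 2 := mul_le_of_le_one_right (sq_nonneg _) hs1
  linarith

/-- Uniform bound on the penalization terms at a maximum of the doubled
functional, with constant depending only on `M` and `L`. -/
theorem doubling_penalization_bound
    (M L : ℝ) (hM : 0 ≤ M) (hL : 0 ≤ L) :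
    ∃ K : ℝ, ∀ (u v : ℝ → ℝ) (ε α C xb yb : ℝ),
      (∀ x, |u x| ≤ M) → (∀ x, |v x| ≤ M) →
      (∀ x y, |v x - v y| ≤ L * |x - y|) →
      ε ∈ Set.Ioc (0:ℝ) 1 → α ∈ Set.Ioc (0:ℝ) 1 → |C| ≤ L + 1 →
      xb ∈ Set.Iic (0:ℝ) → yb ∈ Set.Iic (0:ℝ) →
      (∀ x ∈ Set.Iic (0:ℝ), ∀ y ∈ Set.Iic (0:ℝ),
        u x - v y - (x - y)^2 / (2 * Real.sqrt ε) - C * (x - y)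
          - α * (x^2 + y^2) ≤
        u xb - v yb - (xb - yb)^2 / (2 * Real.sqrt ε) - C * (xb - yb)
          - α * (xb^2 + yb^2)) →
      α * (xb^2 + yb^2) + (xb - yb)^2 / (2 * Real.sqrt ε) ≤ K :=
  doubling_penalization_bound_general M L
end

section
/- Let I = (-∞, 0], let F : I × ℝ × ℝ → ℝ be continuous, and let u : I → ℝ be upper semi-continuous and a viscosity subsolution of F(x, u, u') ≤ 0 on (-∞, 0) (i.e., whenever ψ is C¹ and u - ψ has a local maximum at an interior point x, F(x, u(x), ψ'(x)) ≤ 0). Let ξ ∈ J⁺u(0) (the one-sided superdifferential at 0, taken from the left) and set λ₀ = sup{λ ≥ 0 : ξ + λ ∈ J⁺u(0)}. If λ₀ < ∞, then F(0, u(0), ξ + λ₀) ≤ 0. -/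
/-!
The admissible slopes form a closed, downward-closed set, so `p₀ = ξ + λ₀` is admissible and no
`p₀ + ε` is. Test `u` against `ψ(z) = (p₀ + ε) z + K z²` on `[-δ, 0]` with `K δ = 3ε`: since
`p₀ + ε` is inadmissible, `u - ψ` exceeds `(u - ψ)(0) = u(0)` somewhere in `(-δ, 0)`, while the
superjet estimate for `p₀` keeps `(u - ψ)(-δ)` below it, so `u - ψ` has an interior local maximum
`x`. The same two estimates squeeze `u(x)`, and `ψ'(x) ∈ (p₀ - 5ε, p₀ + ε]`, so the points
`(x, u(x), ψ'(x))`, where the subsolution property gives `F ≤ 0`, accumulate at `(0, u(0), p₀)`.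
-/

open Set

/-- `p ∈ J⁺u(0)`. -/
def IsLeftSuperjet (u : ℝ → ℝ) (p : ℝ) : Prop :=
  ∀ ε > 0, ∃ δ > 0, ∀ y, -δ < y → y ≤ 0 → u y ≤ u 0 + p * y + ε * |y|

namespace IsLeftSuperjet

variable {u : ℝ → ℝ} {p q : ℝ}

theorem mono (hp : IsLeftSuperjet u p) (hqp : q ≤ p) : IsLeftSuperjet u q := by
  intro ε hε
  obtain ⟨δ, hδ, h⟩ := hp ε hε
  refine ⟨δ, hδ, fun y hy hy0 => (h y hy hy0).trans ?_⟩
  nlinarith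

theorem of_forall_sub (h : ∀ ε > 0, IsLeftSuperjet u (p - ε)) : IsLeftSuperjet u p := by
  intro ε hε
  obtain ⟨δ, hδ, hδ'⟩ := h (ε / 2) (half_pos hε) (ε / 2) (half_pos hε)
  refine ⟨δ, hδ, fun y hy hy0 => (hδ' y hy hy0).trans_eq ?_⟩
  rw [abs_of_nonpos hy0]
  ring

theorem _root_.exists_lt_of_not_isLeftSuperjet (h : ¬ IsLeftSuperjet u p) :
    ∃ η > 0, ∀ δ > 0, ∃ y, -δ < y ∧ y < 0 ∧ u 0 + p * y + η * |y| < u y := by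
  unfold IsLeftSuperjet at h
  push Not at h
  obtain ⟨η, hη, h⟩ := h
  refine ⟨η, hη, fun δ hδ => ?_⟩
  obtain ⟨y, hy, hy0, hlt⟩ := h δ hδ
  refine ⟨y, hy, hy0.lt_of_ne ?_, hlt⟩
  rintro rfl
  simp at hlt

end IsLeftSuperjet

section MaximalSlope

variable {u : ℝ → ℝ} {ξ : ℝ}

theorem isLeftSuperjet_add_sSup (hξ : IsLeftSuperjet u ξ) :
    IsLeftSuperjet u (ξ + sSup {l : ℝ | 0 ≤ l ∧ IsLeftSuperjet u (ξ + l)}) := by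
  refine IsLeftSuperjet.of_forall_sub fun ε hε => ?_
  have hne : {l : ℝ | 0 ≤ l ∧ IsLeftSuperjet u (ξ + l)}.Nonempty := ⟨0, le_rfl, by simpa⟩
  obtain ⟨l, ⟨-, hl⟩, hlt⟩ := exists_lt_of_lt_csSup hne (sub_lt_self _ hε)
  exact hl.mono (by linarith)

theorem not_isLeftSuperjet_add_sSup_add
    (hbdd : BddAbove {l : ℝ | 0 ≤ l ∧ IsLeftSuperjet u (ξ + l)}) {ε : ℝ} (hε : 0 < ε) :
    ¬ IsLeftSuperjet u (ξ + sSup {l : ℝ | 0 ≤ l ∧ IsLeftSuperjet u (ξ + l)} + ε) := by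
  set S := {l : ℝ | 0 ≤ l ∧ IsLeftSuperjet u (ξ + l)}
  intro h
  have hmem : sSup S + ε ∈ S := by
    refine ⟨?_, by rwa [← add_assoc]⟩
    linarith [Real.sSup_nonneg fun l (hl : l ∈ S) => hl.1]
  linarith [le_csSup hbdd hmem]

end MaximalSlope

theorem UpperSemicontinuousOn.exists_isLocalMax_of_lt_of_lt {α β : Type*} [TopologicalSpace α]
    [LinearOrder α] [OrderTopology α] [CompactIccSpace α] [LinearOrder β] {g : α → β}
    {a b y : α} (hg : UpperSemicontinuousOn g (Icc a b)) (hy : y ∈ Icc a b) (ha : g a < g y)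
    (hb : g b < g y) : ∃ x ∈ Ioo a b, IsLocalMax g x ∧ g y ≤ g x := by
  obtain ⟨x, hx, hmax⟩ := hg.exists_isMaxOn ⟨y, hy⟩ isCompact_Icc
  have hyx : g y ≤ g x := hmax hy
  have hxa : x ≠ a := by rintro rfl; exact (ha.trans_le hyx).false
  have hxb : x ≠ b := by rintro rfl; exact (hb.trans_le hyx).false
  have hx' : x ∈ Ioo a b := ⟨hx.1.lt_of_ne' hxa, hx.2.lt_of_ne hxb⟩
  exact ⟨x, hx', hmax.isLocalMax (Icc_mem_nhds hx'.1 hx'.2), hyx⟩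

section TestFunction

variable {u : ℝ → ℝ} {p ε δ K : ℝ}

theorem exists_isLocalMax_sub_quadratic (hu : UpperSemicontinuousOn u (Iic 0))
    (hpε : ¬ IsLeftSuperjet u (p + ε)) (hδ : 0 < δ) (hK : 0 < K) (hKδ : 2 * ε < K * δ)
    (hend : u (-δ) ≤ u 0 - p * δ + ε * δ) :
    ∃ x ∈ Ioo (-δ) 0, IsLocalMax (fun z => u z - ((p + ε) * z + K * z ^ 2)) x ∧
      u 0 < u x - ((p + ε) * x + K * x ^ 2) := by
  set g := fun z => u z - ((p + ε) * z + K * z ^ 2)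
  have hg : UpperSemicontinuousOn g (Icc (-δ) 0) :=
    (hu.mono Icc_subset_Iic_self).add
      (ContinuousOn.upperSemicontinuousOn (by fun_prop) : UpperSemicontinuousOn
        (fun z => -((p + ε) * z + K * z ^ 2)) _)
  obtain ⟨η, hη, hη'⟩ := exists_lt_of_not_isLeftSuperjet hpε
  obtain ⟨y, hy, hy0, hlt⟩ := hη' (min δ (η / K)) (by positivity)
  have hyδ : -δ < y := by linarith [min_le_left δ (η / K)]
  have hyK : K * -y < η := by
    have : -y < η / K := by linarith [min_le_right δ (η / K)]
    rwa [lt_div_iff₀ hK, mul_comm] at this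
  have hgy : u 0 < g y := by
    rw [abs_of_neg hy0] at hlt
    simp only [g]
    nlinarith
  have hg0 : g 0 < g y := by simpa [g] using hgy
  have hgδ : g (-δ) < g y := by
    simp only [g]
    nlinarith
  exact hg.exists_isLocalMax_of_lt_of_lt ⟨hyδ.le, hy0.le⟩ hgδ hg0 |>.imp
    fun x ⟨hx, hloc, hyx⟩ => ⟨hx, hloc, hgy.trans_le hyx⟩

theorem IsLeftSuperjet.exists_isLocalMax_sub_near (hu : UpperSemicontinuousOn u (Iic 0))
    (hp : IsLeftSuperjet u p) (hpε : ¬ IsLeftSuperjet u (p + ε)) (hε : 0 < ε) :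
    ∃ x < 0, ∃ ψ : ℝ → ℝ, ContDiff ℝ 1 ψ ∧ IsLocalMax (fun z => u z - ψ z) x ∧
      dist (x, u x, deriv ψ x) (0, u 0, p) ≤ (|p| + 5) * ε := by
  obtain ⟨δ₀, hδ₀, hδ₀'⟩ := hp ε hε
  obtain ⟨δ, hδ, hδδ₀, hδε, hδ1⟩ : ∃ δ, 0 < δ ∧ δ < δ₀ ∧ δ ≤ ε ∧ δ ≤ 1 :=
    ⟨min (δ₀ / 2) (min ε 1), by positivity, by linarith [min_le_left (δ₀ / 2) (min ε 1)],
      (min_le_right _ _).trans (min_le_left _ _), (min_le_right _ _).trans (min_le_right _ _)⟩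
  obtain ⟨K, hK, hKδ⟩ : ∃ K, 0 < K ∧ K * δ = 3 * ε :=
    ⟨3 * ε / δ, by positivity, div_mul_cancel₀ _ hδ.ne'⟩
  have hend := hδ₀' (-δ) (by linarith) (by linarith)
  rw [abs_neg, abs_of_pos hδ] at hend
  obtain ⟨x, ⟨hδx, hx0⟩, hloc, hlow⟩ :=
    exists_isLocalMax_sub_quadratic hu hpε hδ hK (by linarith) (by linarith)
  have hup := hδ₀' x (by linarith) hx0.le
  rw [abs_of_neg hx0] at hup
  have hderiv : deriv (fun z => (p + ε) * z + K * z ^ 2) x = p + ε + 2 * K * x := by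
    have := ((hasDerivAt_id' x).const_mul (p + ε)).add ((hasDerivAt_pow 2 x).const_mul K)
    exact this.deriv.trans (by ring)
  refine ⟨x, hx0, _, by fun_prop, hloc, ?_⟩
  have hpx : |p * x| ≤ |p| * ε := by
    rw [abs_mul, abs_of_neg hx0]
    gcongr
    linarith
  have hKx : -(K * δ) < K * x := by nlinarith
  obtain ⟨hpx₁, hpx₂⟩ := abs_le.mp hpx
  simp only [hderiv, Prod.dist_eq, Real.dist_eq, sub_zero]
  refine max_le ?_ (max_le ?_ ?_) <;> rw [abs_le] <;> refine ⟨?_, ?_⟩ <;>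
    nlinarith [abs_nonneg p, sq_nonneg x]

theorem IsLeftSuperjet.mem_closure_of_forall_not_add
    (hu : UpperSemicontinuousOn u (Iic 0)) (hp : IsLeftSuperjet u p)
    (hmax : ∀ ε > 0, ¬ IsLeftSuperjet u (p + ε)) :
    ((0 : ℝ), u 0, p) ∈ closure {t : ℝ × ℝ × ℝ | ∃ x < 0, ∃ ψ : ℝ → ℝ, ContDiff ℝ 1 ψ ∧
      IsLocalMax (fun z => u z - ψ z) x ∧ t = (x, u x, deriv ψ x)} := by
  refine Metric.mem_closure_iff.2 fun r hr => ?_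
  have hε : 0 < r / (|p| + 6) := by positivity
  obtain ⟨x, hx, ψ, hψ, hloc, hdist⟩ := hp.exists_isLocalMax_sub_near hu (hmax _ hε) hε
  refine ⟨_, ⟨x, hx, ψ, hψ, hloc, rfl⟩, ?_⟩
  calc dist ((0 : ℝ), u 0, p) (x, u x, deriv ψ x) ≤ (|p| + 5) * (r / (|p| + 6)) := by
        rwa [dist_comm]
    _ < r := by
        rw [mul_div_assoc', div_lt_iff₀ (by positivity)]
        nlinarith

end TestFunction

/-- Lemma on maximal slopes: if `u` is a viscosity subsolution of
`F(x,u,u') ≤ 0` on `(-∞,0)`, `ξ ∈ J⁺u(0)`, and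
`λ₀ = sup {λ ≥ 0 : ξ + λ ∈ J⁺u(0)}` is finite, then
`F(0, u(0), ξ + λ₀) ≤ 0`. -/
theorem maximal_slope_lemma
    (F : ℝ → ℝ → ℝ → ℝ) (u : ℝ → ℝ) (ξ : ℝ)
    (superjet : ℝ → Prop)
    (hsuperjet : ∀ p, superjet p ↔
      ∀ ε > 0, ∃ δ > 0, ∀ y, -δ < y → y ≤ 0 →
        u y ≤ u 0 + p * y + ε * |y|)
    (hF : Continuous fun q : ℝ × ℝ × ℝ => F q.1 q.2.1 q.2.2)
    (husc : UpperSemicontinuousOn u (Set.Iic 0))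
    (hsub : ∀ ψ : ℝ → ℝ, ContDiff ℝ 1 ψ → ∀ x < (0:ℝ),
      IsLocalMax (fun z => u z - ψ z) x → F x (u x) (deriv ψ x) ≤ 0)
    (hξ : superjet ξ)
    (hbdd : BddAbove {l : ℝ | 0 ≤ l ∧ superjet (ξ + l)}) :
    F 0 (u 0) (ξ + sSup {l : ℝ | 0 ≤ l ∧ superjet (ξ + l)}) ≤ 0 := by
  obtain rfl : superjet = IsLeftSuperjet u := funext fun p => propext (hsuperjet p)
  have hclosed : IsClosed {t : ℝ × ℝ × ℝ | F t.1 t.2.1 t.2.2 ≤ 0} :=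
    isClosed_le hF continuous_const
  refine closure_minimal ?_ hclosed ((isLeftSuperjet_add_sSup hξ).mem_closure_of_forall_not_add
    husc fun ε hε => not_isLeftSuperjet_add_sSup_add hbdd hε)
  rintro _ ⟨x, hx, ψ, hψ, hloc, rfl⟩
  exact hsub ψ hψ x hx hloc
end

section
/- Let u : (-∞,0] → ℝ be upper semi-continuous, ψ : (-∞,0] → ℝ continuous and differentiable at 0, and suppose u - ψ has a strict local maximum at 0 with u(0) = ψ(0). Let δ > 0 be small, set μ(δ) = ψ(-δ) - u(-δ) > 0 and α(δ) = min(δ, μ(δ)/(2δ)), and let x_δ be a maximum point of x ↦ u(x) - ψ(x) - α(δ)x on [-δ, 0]. If ψ'(0) + α(δ) ∉ J⁺u(0), then x_δ ∈ (-δ, 0), i.e., the maximum is attained in the open interval. -/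
/-!
If the maximum point were `-δ`, comparing with the value at `0` would give
`0 = u 0 - ψ 0 ≤ u (-δ) - ψ (-δ) + α δ ≤ -μ + μ / 2 < 0`, since `α ≤ μ / (2δ)`.
If it were `0`, then `y ↦ u 0 + ψ y - ψ 0 + α y` would touch `u` from above at `0` on the left,
and the derivative `ψ'(0) + α` of such a test function always lies in `J⁺u(0)`.
-/

open Filter Topology Set

/-- The one-sided superdifferential `J⁺u(0)` of `u` at `0`, from the left. -/
def leftSuperdifferentialAtZero (u : ℝ → ℝ) : Set ℝ :=
  {p | ∀ ε > 0, ∃ η > 0, ∀ y, -η < y → y ≤ 0 → u y ≤ u 0 + p * y + ε * |y|}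

theorem mem_leftSuperdifferentialAtZero_of_eventually_le {u φ : ℝ → ℝ} {p : ℝ}
    (hle : ∀ᶠ y in 𝓝[≤] 0, u y ≤ φ y) (h0 : φ 0 = u 0) (hφ : HasDerivWithinAt φ p (Iic 0) 0) :
    p ∈ leftSuperdifferentialAtZero u := by
  intro ε hε
  have hφε : ∀ᶠ y in 𝓝[≤] 0, φ y ≤ φ 0 + p * y + ε * |y| := by
    filter_upwards [(hasDerivWithinAt_iff_isLittleO.mp hφ).def hε] with y hy
    simp only [sub_zero, smul_eq_mul, Real.norm_eq_abs] at hy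
    linarith [le_abs_self (φ y - φ 0 - y * p)]
  obtain ⟨l, hl, hsub⟩ := mem_nhdsLE_iff_exists_Ioc_subset.mp (hle.and hφε)
  refine ⟨-l, neg_pos.mpr hl, fun y hy hy0 => ?_⟩
  obtain ⟨hu, hφy⟩ := hsub ⟨by linarith, hy0⟩
  linarith

theorem mem_leftSuperdifferentialAtZero_of_isMaxOn {u ψ : ℝ → ℝ} {ψ' α δ : ℝ} (hδ : 0 < δ)
    (hψ' : HasDerivWithinAt ψ ψ' (Iic 0) 0)
    (hmax : IsMaxOn (fun x => u x - ψ x - α * x) (Icc (-δ) 0) 0) :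
    ψ' + α ∈ leftSuperdifferentialAtZero u := by
  refine mem_leftSuperdifferentialAtZero_of_eventually_le (φ := fun y => u 0 + (ψ y - ψ 0) + α * y)
    ?_ (by simp) ?_
  · filter_upwards [Icc_mem_nhdsLE (neg_neg_of_pos hδ)] with y hy
    have := isMaxOn_iff.mp hmax y hy
    simp only [mul_zero, sub_zero] at this
    linarith
  · simpa using ((hψ'.sub_const (ψ 0)).const_add (u 0)).fun_add
      ((hasDerivWithinAt_id 0 _).const_mul α)

theorem ne_left_of_isMaxOn_sub_mul {g : ℝ → ℝ} {a b α x : ℝ} (hab : a ≤ b)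
    (hslope : α * (b - a) < g b - g a) (hmax : IsMaxOn (fun x => g x - α * x) (Icc a b) x) :
    x ≠ a := by
  rintro rfl
  have := isMaxOn_iff.mp hmax b (right_mem_Icc.mpr hab)
  linarith

theorem interior_maximum_point_general
    (u ψ : ℝ → ℝ) (ψ' δ xδ : ℝ)
    (hψ' : HasDerivWithinAt ψ ψ' (Set.Iic 0) 0)
    (hδ : 0 < δ)
    (heq : u 0 = ψ 0)
    (hμ : 0 < ψ (-δ) - u (-δ))
    (hxδ : xδ ∈ Set.Icc (-δ) 0)
    (hmax : ∀ x ∈ Set.Icc (-δ) (0:ℝ),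
      u x - ψ x - min δ ((ψ (-δ) - u (-δ)) / (2*δ)) * x ≤
      u xδ - ψ xδ - min δ ((ψ (-δ) - u (-δ)) / (2*δ)) * xδ)
    (hnotjet : ¬ (∀ ε > 0, ∃ η > 0, ∀ y, -η < y → y ≤ 0 →
      u y ≤ u 0 + (ψ' + min δ ((ψ (-δ) - u (-δ)) / (2*δ))) * y + ε * |y|)) :
    xδ ∈ Set.Ioo (-δ) 0 := by
  set α := min δ ((ψ (-δ) - u (-δ)) / (2*δ))
  have hmax' : IsMaxOn (fun x => u x - ψ x - α * x) (Icc (-δ) 0) xδ := hmax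
  have hslope : α * (0 - -δ) < (u 0 - ψ 0) - (u (-δ) - ψ (-δ)) := by
    have hαδ : α * δ ≤ (ψ (-δ) - u (-δ)) / 2 := calc
      α * δ ≤ (ψ (-δ) - u (-δ)) / (2*δ) * δ := by gcongr; exact min_le_right _ _
      _ = (ψ (-δ) - u (-δ)) / 2 := by field_simp
    linarith
  refine ⟨(hxδ.1.lt_of_ne (ne_left_of_isMaxOn_sub_mul (by linarith) hslope hmax').symm),
    hxδ.2.lt_of_ne ?_⟩
  rintro rfl
  exact hnotjet (mem_leftSuperdifferentialAtZero_of_isMaxOn hδ hψ' hmax')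

/-- If `u - ψ` has a strict local maximum at `0`, `ψ'(0) + α(δ) ∉ J⁺u(0)`, and
`x_δ` maximizes `u - ψ - α(δ)x` on `[-δ,0]`, then `x_δ ∈ (-δ, 0)`. -/
theorem interior_maximum_point
    (u ψ : ℝ → ℝ) (ψ' δ xδ : ℝ)
    (husc : UpperSemicontinuousOn u (Set.Iic 0))
    (hψ : ContinuousOn ψ (Set.Iic 0))
    (hψ' : HasDerivWithinAt ψ ψ' (Set.Iic 0) 0)
    (hδ : 0 < δ)
    (hstrict : ∀ x ∈ Set.Ico (-δ) (0:ℝ), u x - ψ x < u 0 - ψ 0)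
    (heq : u 0 = ψ 0)
    (hμ : 0 < ψ (-δ) - u (-δ))
    (hxδ : xδ ∈ Set.Icc (-δ) 0)
    (hmax : ∀ x ∈ Set.Icc (-δ) (0:ℝ),
      u x - ψ x - min δ ((ψ (-δ) - u (-δ)) / (2*δ)) * x ≤
      u xδ - ψ xδ - min δ ((ψ (-δ) - u (-δ)) / (2*δ)) * xδ)
    (hnotjet : ¬ (∀ ε > 0, ∃ η > 0, ∀ y, -η < y → y ≤ 0 →
      u y ≤ u 0 + (ψ' + min δ ((ψ (-δ) - u (-δ)) / (2*δ))) * y + ε * |y|)) :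
    xδ ∈ Set.Ioo (-δ) 0 :=
  interior_maximum_point_general u ψ ψ' δ xδ hψ' hδ heq hμ hxδ hmax hnotjet
end
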